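/- Let A ∈ ℂ^{n×n} with Ind A = 1 and rank A² = rank A = r ≤ n. Then the entries a^g_{ij} of the group inverse A^g satisfy, for all i, j ∈ {1,…,n}: a^g_{ij} = ( Σ_{α ∈ I_{r,n}{j}} |((A²_{j.}(a_{i.}))_α^α| ) / ( Σ_{α ∈ I_{r,n}} |((A²))_α^α| ), and also a^g_{ij} = ( Σ_{β ∈ J_{r,n}{i}} |((A²_{.i}(a_{.j}))_β^β| ) / ( Σ_{β ∈ J_{r,n}} |((A²))_β^β| ), where a_{i.} and a_{.j} denote the i-th row and j-th column of A. -/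

import Mathlib

/-!
Put `B = 1 + t A²` over `ℂ[t]`. The coefficient of `t^k` in `det B` is the sum of the `k × k`
principal minors of `A²`, and replacing row `j` of `B` by `t aᵢ.` makes the coefficient of `t^r`
the row numerator. Since `A = A^g A²`, we have `t A = A^g (B - 1)`, hence
`t A adj B = det B • A^g - A^g adj B`. At `t^r` the `(i, j)` entry of the last term is a sum of
`(r+1) × (r+1)` minors of a matrix whose rows lie in the row space of `A²`, hence `0`, leaving
`numerator = d a^g_ij`.

The denominator `d` is, up to sign, the coefficient of `t^(n-r)` in the characteristic polynomial
of `A²`. Its trailing degree is the dimension of the generalized `0`-eigenspace, which for a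
matrix of index one is `ker A²`, of dimension `n - r`; so `d ≠ 0`.
The column formula is the row formula for the transposes.
-/

open Matrix Polynomial

noncomputable def Matrix.pminor {n : Type*} [DecidableEq n] [Fintype n]
    (M : Matrix n n ℂ) (β : Finset n) : ℂ :=
  (M.submatrix (fun i : {x // x ∈ β} => i.1) (fun i : {x // x ∈ β} => i.1)).det

namespace Matrix

section CommRing

variable {n R : Type*} [Fintype n] [DecidableEq n] [CommRing R]

theorem det_updateRow_eq_vecMul_adjugate (B : Matrix n n R) (j : n) (c : n → R) :
    (B.updateRow j c).det = (c ᵥ* B.adjugate) j := by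
  rw [← det_transpose, ← updateCol_transpose, ← cramer_apply, cramer_eq_adjugate_mulVec,
    ← adjugate_transpose, mulVec_transpose]

theorem coeff_det_one_add_X_smul_updateRow_X_smul (M : Matrix n n R) (j : n) (c : n → R)
    (k : ℕ) :
    ((1 + (X : R[X]) • M.map C).updateRow j ((X : R[X]) • (C ∘ c))).det.coeff k =
      ∑ s ∈ (Finset.univ.powersetCard k).filter (j ∈ ·),
        ((M.updateRow j c).submatrix (Subtype.val : s → n) Subtype.val).det := by
  have hrow : ∀ c : n → R, 1 + (X : R[X]) • (M.updateRow j c).map C =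
      (1 + (X : R[X]) • M.map C).updateRow j (Pi.single j 1 + (X : R[X]) • (C ∘ c)) := by
    intro c
    ext a b
    by_cases ha : a = j
    · subst ha; simp [Pi.single_apply, one_apply, eq_comm]
    · simp [ha, updateRow_ne]
  have hdiff : ((1 + (X : R[X]) • M.map C).updateRow j ((X : R[X]) • (C ∘ c))).det =
      (1 + (X : R[X]) • (M.updateRow j c).map C).det -
        (1 + (X : R[X]) • (M.updateRow j 0).map C).det := by
    rw [hrow, hrow, det_updateRow_add]
    simp
  rw [hdiff, coeff_sub, coeff_det_one_add_X_smul_eq_sum_minors,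
    coeff_det_one_add_X_smul_eq_sum_minors, ← Finset.sum_sub_distrib, Finset.sum_filter]
  refine Finset.sum_congr rfl fun s _ => ?_
  split_ifs with hj
  · rw [det_eq_zero_of_row_eq_zero (A := (M.updateRow j 0).submatrix _ _) (⟨j, hj⟩ : s)
      (fun _ => by simp), sub_zero]
  · rw [sub_eq_zero]
    congr 1
    ext a b
    have : (a : n) ≠ j := fun h => hj (h ▸ a.2)
    simp [updateRow_ne this]

theorem det_updateRow_X_smul_of_mul_eq {G M K : Matrix n n R} (h : G * M = K) (i j : n) :
    ((1 + (X : R[X]) • M.map C).updateRow j ((X : R[X]) • (C ∘ K i))).det =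
      (1 + (X : R[X]) • M.map C).det * C (G i j) -
        ((1 + (X : R[X]) • M.map C).updateRow j (C ∘ G i)).det := by
  set B := 1 + (X : R[X]) • M.map C
  have hK : (X : R[X]) • K.map C = G.map C * (B - 1) := by
    rw [← h, Matrix.map_mul, add_sub_cancel_left, mul_smul_comm]
  rw [det_updateRow_eq_vecMul_adjugate, det_updateRow_eq_vecMul_adjugate]
  calc (((X : R[X]) • (C ∘ K i)) ᵥ* B.adjugate) j = ((X : R[X]) • K.map C * B.adjugate) i j :=
        rfl
    _ = (B.det • G.map C - G.map C * B.adjugate) i j := by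
      rw [hK, mul_assoc, sub_mul, mul_adjugate, one_mul, mul_sub, mul_smul_comm, mul_one]
    _ = B.det * C (G i j) - ((C ∘ G i) ᵥ* B.adjugate) j := rfl

end CommRing

section Field

variable {m n K : Type*} [Fintype n] [Field K]

theorem det_submatrix_eq_zero_of_rank_lt {ι : Type*} [Fintype ι] [DecidableEq ι]
    (M : Matrix m n K) (f : ι → m) (g : ι → n) (h : M.rank < Fintype.card ι) :
    (M.submatrix f g).det = 0 := by
  by_contra hdet
  have hfull := rank_of_isUnit _ ((isUnit_iff_isUnit_det _).mpr (Ne.isUnit hdet))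
  have := rank_submatrix_le M f g
  omega

theorem rank_updateRow_vecMul_le [Fintype m] [DecidableEq m] (M : Matrix m n K) (j : m)
    (v : m → K) : (M.updateRow j (v ᵥ* M)).rank ≤ M.rank :=
  calc (M.updateRow j (v ᵥ* M)).rank = ((1 : Matrix m m K).updateRow j v * M).rank := by
        rw [updateRow_mul, Matrix.one_mul]
    _ ≤ M.rank := rank_mul_le_right _ _

end Field

end Matrix

theorem pow_mul_pow_succ_eq_of_mul_sq_eq {M : Type*} [Monoid M] {a b : M} (h : b * a ^ 2 = a) :
    ∀ k : ℕ, b ^ k * a ^ (k + 1) = a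
  | 0 => by simp
  | k + 1 => by
    have hsplit : a ^ (k + 1 + 1) = a ^ 2 * a ^ k := by rw [← pow_add]; congr 1; omega
    calc b ^ (k + 1) * a ^ (k + 1 + 1) = b ^ k * (b * a ^ 2 * a ^ k) := by
          rw [hsplit, pow_succ, mul_assoc, mul_assoc]
      _ = a := by rw [h, ← pow_succ', pow_mul_pow_succ_eq_of_mul_sq_eq h k]

theorem Module.End.maxGenEigenspace_zero_eq_ker_of_mul_sq_eq {R M : Type*} [CommRing R]
    [AddCommGroup M] [Module R M] {f g : Module.End R M} (h : g * f ^ 2 = f) :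
    f.maxGenEigenspace 0 = LinearMap.ker f := by
  refine le_antisymm (fun x hx => ?_) (eigenspace_zero f ▸ eigenspace_le_maxGenEigenspace)
  obtain ⟨k, hk⟩ := (mem_maxGenEigenspace f 0 x).mp hx
  rw [zero_smul, sub_zero] at hk
  rw [LinearMap.mem_ker, ← pow_mul_pow_succ_eq_of_mul_sq_eq h k, Module.End.mul_apply, pow_succ',
    Module.End.mul_apply, hk, map_zero, map_zero]

namespace Matrix

section Field

variable {n K : Type*} [Fintype n] [DecidableEq n] [Field K]

theorem coeff_charpoly_card_sub_rank_ne_zero {M Q : Matrix n n K} (h : Q * M ^ 2 = M) :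
    M.charpoly.coeff (Fintype.card n - M.rank) ≠ 0 := by
  have hlin : toLin' Q * toLin' M ^ 2 = toLin' M := by
    rw [← toLin'_pow, Module.End.mul_eq_comp, ← toLin'_mul, h]
  have hker : Module.finrank K (LinearMap.ker (toLin' M)) = Fintype.card n - M.rank := by
    have := LinearMap.finrank_range_add_finrank_ker (toLin' M)
    have hrange : Module.finrank K (LinearMap.range (toLin' M)) = M.rank := rfl
    rw [Module.finrank_fintype_fun_eq_card] at this
    omega
  have htrail : M.charpoly.natTrailingDegree = Fintype.card n - M.rank := by
    rw [← charpoly_toLin', ← LinearMap.finrank_maxGenEigenspace_zero_eq,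
      Module.End.maxGenEigenspace_zero_eq_ker_of_mul_sq_eq hlin, hker]
  rw [← htrail]
  exact trailingCoeff_nonzero_iff_nonzero.mpr (charpoly_monic M).ne_zero

theorem sum_det_submatrix_powersetCard_rank_ne_zero {M Q : Matrix n n K} (h : Q * M ^ 2 = M) :
    ∑ s ∈ Finset.univ.powersetCard M.rank,
      (M.submatrix (Subtype.val : s → n) Subtype.val).det ≠ 0 := by
  intro hsum
  apply coeff_charpoly_card_sub_rank_ne_zero h
  rw [charpoly_coeff_eq_sum_minors M _ (rank_le_card_width M), hsum, mul_zero]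

end Field

theorem pminor_transpose {n : Type*} [Fintype n] [DecidableEq n] (M : Matrix n n ℂ)
    (β : Finset n) : Mᵀ.pminor β = M.pminor β := by
  rw [pminor, pminor, ← transpose_submatrix, det_transpose]

end Matrix

def IsGroupInverse {M : Type*} [Monoid M] (a x : M) : Prop :=
  a * x * a = a ∧ x * a * x = x ∧ a * x = x * a

namespace IsGroupInverse

section Monoid

variable {M : Type*} [Monoid M] {a x : M}

theorem mul_sq (h : IsGroupInverse a x) : x * a ^ 2 = a := by
  rw [sq, ← mul_assoc, ← h.2.2, h.1]

theorem pow_three_mul_sq (h : IsGroupInverse a x) : x ^ 3 * a ^ 2 = x := by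
  rw [pow_succ, mul_assoc, h.mul_sq, sq, mul_assoc, ← h.2.2, ← mul_assoc, h.2.1]

theorem sq_mul_sq_sq (h : IsGroupInverse a x) : x ^ 2 * (a ^ 2) ^ 2 = a ^ 2 := by
  rw [sq x, sq (a ^ 2), mul_assoc, ← mul_assoc x (a ^ 2), h.mul_sq, ← pow_succ', pow_succ,
    ← mul_assoc, h.mul_sq, sq]

end Monoid

variable {n : Type*} [Fintype n]

theorem transpose {R : Type*} [CommSemiring R] [DecidableEq n] {A X : Matrix n n R}
    (h : IsGroupInverse A X) : IsGroupInverse Aᵀ Xᵀ := by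
  obtain ⟨h1, h2, h3⟩ := h
  refine ⟨?_, ?_, ?_⟩
  · rw [← transpose_mul, ← transpose_mul, ← mul_assoc, h1]
  · rw [← transpose_mul, ← transpose_mul, ← mul_assoc, h2]
  · rw [← transpose_mul, ← transpose_mul, h3]

theorem apply_eq_div_pminor_updateRow [DecidableEq n] {A G : Matrix n n ℂ}
    (h : IsGroupInverse A G) (i j : n) :
    G i j =
      (∑ α ∈ (Finset.univ.powersetCard (A ^ 2).rank).filter (j ∈ ·),
        ((A ^ 2).updateRow j (A i)).pminor α) /
      ∑ α ∈ Finset.univ.powersetCard (A ^ 2).rank, (A ^ 2).pminor α := by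
  set r := (A ^ 2).rank
  have hden : ∑ α ∈ Finset.univ.powersetCard r, (A ^ 2).pminor α ≠ 0 :=
    sum_det_submatrix_powersetCard_rank_ne_zero h.sq_mul_sq_sq
  have hcorr : ((1 + (X : ℂ[X]) • (A ^ 2).map C).updateRow j (C ∘ G i)).det.coeff r = 0 := by
    rw [← coeff_X_mul, ← det_updateRow_smul, coeff_det_one_add_X_smul_updateRow_X_smul]
    refine Finset.sum_eq_zero fun s hs => det_submatrix_eq_zero_of_rank_lt _ _ _ ?_
    have hrow : G i = (G ^ 3) i ᵥ* A ^ 2 := (congrFun h.pow_three_mul_sq i).symm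
    rw [Fintype.card_coe, (Finset.mem_powersetCard.mp (Finset.mem_filter.mp hs).1).2, hrow]
    exact Nat.lt_succ_of_le (rank_updateRow_vecMul_le _ _ _)
  have key := congrArg (coeff · r) (det_updateRow_X_smul_of_mul_eq h.mul_sq i j)
  simp only [coeff_det_one_add_X_smul_updateRow_X_smul, coeff_sub, coeff_mul_C,
    coeff_det_one_add_X_smul_eq_sum_minors, hcorr, sub_zero] at key
  rw [eq_div_iff hden, mul_comm]
  exact key.symm

end IsGroupInverse

theorem groupInverse_entry_det_repr_general
    (n r : ℕ) (A : Matrix (Fin n) (Fin n) ℂ)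
    (hr1 : (A ^ 2).rank = r)
    (X : Matrix (Fin n) (Fin n) ℂ)
    (h1 : A * X * A = A) (h2 : X * A * X = X) (h3 : A * X = X * A)
    (i j : Fin n) :
    X i j =
      (∑ α ∈ (Finset.powersetCard r (Finset.univ : Finset (Fin n))).filter
          (fun α => j ∈ α),
        ((A ^ 2).updateRow j (fun l => A i l)).pminor α) /
      (∑ α ∈ Finset.powersetCard r (Finset.univ : Finset (Fin n)),
        (A ^ 2).pminor α) ∧
    X i j =
      (∑ β ∈ (Finset.powersetCard r (Finset.univ : Finset (Fin n))).filter
          (fun β => i ∈ β),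
        ((A ^ 2).updateCol i (fun l => A l j)).pminor β) /
      (∑ β ∈ Finset.powersetCard r (Finset.univ : Finset (Fin n)),
        (A ^ 2).pminor β) := by
  subst hr1
  have h : IsGroupInverse A X := ⟨h1, h2, h3⟩
  refine ⟨h.apply_eq_div_pminor_updateRow i j, ?_⟩
  have hT := h.transpose.apply_eq_div_pminor_updateRow j i
  rw [← transpose_pow, rank_transpose, updateRow_transpose] at hT
  simp only [pminor_transpose] at hT
  exact hT

/-- Determinantal representations of the group inverse `X = A^g`
(characterized by `AXA = A`, `XAX = X`, `AX = XA`) of `A ∈ ℂ^{n×n}` with `Ind A = 1`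
and `rank A² = rank A = r ≤ n`. -/
theorem groupInverse_entry_det_repr
    (n r : ℕ) (A : Matrix (Fin n) (Fin n) ℂ)
    (hInd : IsLeast {j : ℕ | (A ^ (j + 1)).rank = (A ^ j).rank} 1)
    (hr1 : (A ^ 2).rank = r) (hr2 : A.rank = r) (hrn : r ≤ n)
    (X : Matrix (Fin n) (Fin n) ℂ)
    (h1 : A * X * A = A) (h2 : X * A * X = X) (h3 : A * X = X * A)
    (i j : Fin n) :
    X i j =
      (∑ α ∈ (Finset.powersetCard r (Finset.univ : Finset (Fin n))).filter
          (fun α => j ∈ α),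
        ((A ^ 2).updateRow j (fun l => A i l)).pminor α) /
      (∑ α ∈ Finset.powersetCard r (Finset.univ : Finset (Fin n)),
        (A ^ 2).pminor α) ∧
    X i j =
      (∑ β ∈ (Finset.powersetCard r (Finset.univ : Finset (Fin n))).filter
          (fun β => i ∈ β),
        ((A ^ 2).updateCol i (fun l => A l j)).pminor β) /
      (∑ β ∈ Finset.powersetCard r (Finset.univ : Finset (Fin n)),
        (A ^ 2).pminor β) :=
  groupInverse_entry_det_repr_general n r A hr1 X h1 h2 h3 i j
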